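/- arXiv:2210.02722 — 10 statements merged into one kernel-verified Lean document; each statement's English description precedes it below -/
import Mathlib

section
/- Let k, h, d, b_1, …, b_k be positive integers and a ≥ 2, set A = {a, ha + d·b_1, …, ha + d·b_k}, and assume the elements of A have gcd 1 and gcd(a, d) = 1. Then for every 0 ≤ r ≤ a−1, N_{(d·r) mod a} equals the minimum, over all m ∈ ℕ such that ma + r can be written as Σ_{i=1}^k b_i x_i with x_i ∈ ℕ, of the quantity O_B(ma + r)·h·a + (ma + r)·d, where B = (b_1, …, b_k). -/
/-- `Nr S a r` is the least element of the additive submonoid of `ℕ` generated by `S`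
that is congruent to `r` modulo `a`. -/
noncomputable def Nr (S : Set ℕ) (a r : ℕ) : ℕ :=
  sInf {n : ℕ | n ∈ AddSubmonoid.closure S ∧ n % a = r}

/-- `OB b M` is the minimum of `x₁ + ⋯ + x_k` over tuples with `∑ bᵢ xᵢ = M`. -/
noncomputable def OB {k : ℕ} (b : Fin k → ℕ) (M : ℕ) : ℕ :=
  sInf {s : ℕ | ∃ x : Fin k → ℕ, ∑ i, b i * x i = M ∧ ∑ i, x i = s}

/-!
An element of the monoid is `y a + ∑ xᵢ (h a + d bᵢ) = y a + (∑ xᵢ) h a + d M` with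
`M = ∑ bᵢ xᵢ`. It is congruent to `d M` modulo `a` and at least `O_B(M) h a + M d`, which is
itself in the monoid (take `y = 0` and an optimal `x`). As `gcd(a, d) = 1`, the residue `d r`
forces `M ≡ r`, i.e. `M = m a + r`.
-/

open Finset

lemma mem_closure_singleton_union_range_iff {ι : Type*} [Fintype ι] (a : ℕ) (f : ι → ℕ)
    {n : ℕ} :
    n ∈ AddSubmonoid.closure ({a} ∪ Set.range f) ↔
      ∃ (y : ℕ) (x : ι → ℕ), y * a + ∑ i, x i * f i = n := by
  simp only [AddSubmonoid.closure_union, AddSubmonoid.mem_sup,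
    AddSubmonoid.mem_closure_singleton, AddSubmonoid.mem_closure_range_iff_of_fintype,
    smul_eq_mul]
  constructor
  · rintro ⟨_, ⟨y, rfl⟩, _, ⟨x, rfl⟩, rfl⟩
    exact ⟨y, x, rfl⟩
  · rintro ⟨y, x, rfl⟩
    exact ⟨_, ⟨y, rfl⟩, _, ⟨x, rfl⟩, rfl⟩

lemma sum_mul_add_mul {ι : Type*} [Fintype ι] (x b : ι → ℕ) (c d : ℕ) :
    ∑ i, x i * (c + d * b i) = (∑ i, x i) * c + d * ∑ i, b i * x i := by
  rw [sum_mul, mul_sum, ← sum_add_distrib]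
  exact sum_congr rfl fun i _ => by ring

section OB

variable {k : ℕ} (b : Fin k → ℕ)

lemma OB_le_sum (x : Fin k → ℕ) : OB b (∑ i, b i * x i) ≤ ∑ i, x i :=
  Nat.sInf_le ⟨x, rfl, rfl⟩

lemma exists_sum_eq_OB {M : ℕ} (hM : ∃ x : Fin k → ℕ, ∑ i, b i * x i = M) :
    ∃ x : Fin k → ℕ, ∑ i, b i * x i = M ∧ ∑ i, x i = OB b M := by
  obtain ⟨x, hx⟩ := hM
  have hne : {s | ∃ x : Fin k → ℕ, ∑ i, b i * x i = M ∧ ∑ i, x i = s}.Nonempty :=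
    ⟨∑ i, x i, x, hx, rfl⟩
  exact Nat.sInf_mem hne

variable (h d a : ℕ)

lemma exists_modEq_OB_mul_add_le_of_mem_closure {n : ℕ}
    (hn : n ∈ AddSubmonoid.closure ({a} ∪ Set.range fun i => h * a + d * b i)) :
    ∃ x : Fin k → ℕ, n ≡ d * ∑ i, b i * x i [MOD a] ∧
      OB b (∑ i, b i * x i) * h * a + (∑ i, b i * x i) * d ≤ n := by
  obtain ⟨y, x, rfl⟩ := (mem_closure_singleton_union_range_iff _ _).mp hn
  refine ⟨x, ?_, ?_⟩
  · rw [sum_mul_add_mul, Nat.ModEq, show y * a + ((∑ i, x i) * (h * a) + d * ∑ i, b i * x i)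
      = d * ∑ i, b i * x i + (y + (∑ i, x i) * h) * a by ring, Nat.add_mul_mod_self_right]
  · calc OB b (∑ i, b i * x i) * h * a + (∑ i, b i * x i) * d
        ≤ (∑ i, x i) * h * a + (∑ i, b i * x i) * d := by gcongr; exact OB_le_sum b x
      _ ≤ y * a + ∑ i, x i * (h * a + d * b i) := by
          rw [sum_mul_add_mul, mul_assoc _ h a, mul_comm _ d]
          exact Nat.le_add_left _ _

lemma OB_mul_add_mem_closure {M : ℕ} (hM : ∃ x : Fin k → ℕ, ∑ i, b i * x i = M) :
    OB b M * h * a + M * d ∈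
      AddSubmonoid.closure ({a} ∪ Set.range fun i => h * a + d * b i) := by
  obtain ⟨x, hxM, hxOB⟩ := exists_sum_eq_OB b hM
  refine (mem_closure_singleton_union_range_iff _ _).mpr ⟨0, x, ?_⟩
  rw [sum_mul_add_mul, hxM, hxOB]
  ring

end OB

theorem stmt1_general (k h d a : ℕ) (b : Fin k → ℕ)
    (had : Nat.gcd a d = 1) :
    ∀ r < a,
      Nr (({a} : Set ℕ) ∪ Set.range (fun i => h * a + d * b i)) a (d * r % a)
        = sInf {N : ℕ | ∃ m : ℕ, (∃ x : Fin k → ℕ, ∑ i, b i * x i = m * a + r) ∧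
            N = OB b (m * a + r) * h * a + (m * a + r) * d} := by
  intro r hr
  apply csInf_eq_csInf_of_forall_exists_le
  · rintro n ⟨hn, hnr⟩
    obtain ⟨x, hnM, hle⟩ := exists_modEq_OB_mul_add_le_of_mem_closure b h d a hn
    set M := ∑ i, b i * x i
    have hMr : M % a = r :=
      Eq.trans (Nat.ModEq.cancel_left_of_coprime had (hnM.symm.trans hnr)) (Nat.mod_eq_of_lt hr)
    have hM : M / a * a + r = M := hMr ▸ Nat.div_add_mod' M a
    exact ⟨_, ⟨M / a, ⟨x, hM.symm⟩, by rw [hM]⟩, hle⟩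
  · rintro _ ⟨m, hm, rfl⟩
    refine ⟨_, ⟨OB_mul_add_mem_closure b h d a hm, ?_⟩, le_rfl⟩
    rw [show OB b (m * a + r) * h * a + (m * a + r) * d
      = d * r + (OB b (m * a + r) * h + m * d) * a by ring, Nat.add_mul_mod_self_right]

theorem stmt1 (k h d a : ℕ) (b : Fin k → ℕ)
    (hk : 0 < k) (hh : 0 < h) (hd : 0 < d) (hb : ∀ i, 0 < b i) (ha : 2 ≤ a)
    (hgcd : Nat.gcd a (Finset.univ.gcd (fun i => h * a + d * b i)) = 1)
    (had : Nat.gcd a d = 1) :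
    ∀ r < a,
      Nr (({a} : Set ℕ) ∪ Set.range (fun i => h * a + d * b i)) a (d * r % a)
        = sInf {N : ℕ | ∃ m : ℕ, (∃ x : Fin k → ℕ, ∑ i, b i * x i = m * a + r) ∧
            N = OB b (m * a + r) * h * a + (m * a + r) * d} :=
  stmt1_general k h d a b had
end

section
/- Let a ≥ 2 and let S = {a} ∪ {a + i² : i a positive integer}. Then for every 1 ≤ r ≤ a−1, N_r = min over m ∈ ℕ of ( ι(ma + r)·a + (ma + r) ). -/
/-- `iota n` is the least `s ≥ 1` such that `n` is a sum of `s` squares of positive integers. -/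
noncomputable def iota (n : ℕ) : ℕ :=
  sInf {s : ℕ | ∃ c : Fin s → ℕ, (∀ i, 0 < c i) ∧ ∑ i, (c i) ^ 2 = n}

def shiftedSquares (a : ℕ) : Set ℕ :=
  {a} ∪ {n : ℕ | ∃ i : ℕ, 0 < i ∧ n = a + i ^ 2}

theorem iota_spec (n : ℕ) :
    ∃ c : Fin (iota n) → ℕ, (∀ i, 0 < c i) ∧ ∑ i, c i ^ 2 = n :=
  Nat.sInf_mem (s := {s | ∃ c : Fin s → ℕ, (∀ i, 0 < c i) ∧ ∑ i, c i ^ 2 = n})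
    ⟨n, fun _ => 1, fun _ => one_pos, by simp⟩

theorem iota_le_of_sum_sq_eq {s : ℕ} (c : Fin s → ℕ) (hc : ∀ i, 0 < c i) :
    iota (∑ i, c i ^ 2) ≤ s :=
  Nat.sInf_le ⟨c, hc, rfl⟩

theorem mul_add_sum_sq_mem_closure (a : ℕ) {s : ℕ} (c : Fin s → ℕ) (hc : ∀ i, 0 < c i) :
    s * a + ∑ i, c i ^ 2 ∈ AddSubmonoid.closure (shiftedSquares a) := by
  have hsum : s * a + ∑ i, c i ^ 2 = ∑ i, (a + c i ^ 2) := by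
    simp [Finset.sum_add_distrib]
  rw [hsum]
  exact AddSubmonoid.sum_mem _ fun i _ ↦ AddSubmonoid.subset_closure (Or.inr ⟨c i, hc i, rfl⟩)

theorem iota_mul_add_self_mem_closure (a n : ℕ) :
    iota n * a + n ∈ AddSubmonoid.closure (shiftedSquares a) := by
  obtain ⟨c, hc, hsum⟩ := iota_spec n
  simpa [hsum] using mul_add_sum_sq_mem_closure a c hc

theorem exists_eq_mul_add_sum_sq_of_mem_closure {a x : ℕ}
    (hx : x ∈ AddSubmonoid.closure (shiftedSquares a)) :
    ∃ t s : ℕ, s ≤ t ∧ ∃ c : Fin s → ℕ, (∀ i, 0 < c i) ∧ x = t * a + ∑ i, c i ^ 2 := by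
  induction hx using AddSubmonoid.closure_induction with
  | mem x hx =>
    rcases hx with rfl | ⟨i, hi, rfl⟩
    · exact ⟨1, 0, zero_le_one, Fin.elim0, fun i ↦ i.elim0, by simp⟩
    · exact ⟨1, 1, le_rfl, fun _ ↦ i, fun _ ↦ hi, by simp⟩
  | zero => exact ⟨0, 0, le_rfl, Fin.elim0, fun i ↦ i.elim0, by simp⟩
  | add x y _ _ ihx ihy =>
    obtain ⟨t₁, s₁, hs₁, c₁, hc₁, rfl⟩ := ihx
    obtain ⟨t₂, s₂, hs₂, c₂, hc₂, rfl⟩ := ihy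
    refine ⟨t₁ + t₂, s₁ + s₂, add_le_add hs₁ hs₂, Fin.append c₁ c₂, ?_, ?_⟩
    · exact Fin.addCases (by simpa using hc₁) (by simpa using hc₂)
    · rw [Fin.sum_univ_add]
      simp only [Fin.append_left, Fin.append_right]
      ring

theorem exists_iota_mul_add_self_le_of_mem_closure {a x : ℕ}
    (hx : x ∈ AddSubmonoid.closure (shiftedSquares a)) :
    ∃ q : ℕ, q % a = x % a ∧ iota q * a + q ≤ x := by
  obtain ⟨t, s, hst, c, hc, rfl⟩ := exists_eq_mul_add_sum_sq_of_mem_closure hx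
  refine ⟨∑ i, c i ^ 2, by simp, ?_⟩
  have hiota := iota_le_of_sum_sq_eq c hc
  gcongr
  omega

theorem stmt3_general (a : ℕ) :
    ∀ r : ℕ, 1 ≤ r → r ≤ a - 1 →
      Nr (({a} : Set ℕ) ∪ {n : ℕ | ∃ i : ℕ, 0 < i ∧ n = a + i ^ 2}) a r
        = sInf (Set.range fun m : ℕ => iota (m * a + r) * a + (m * a + r)) := by
  intro r hr₁ hr
  have hra : r < a := by omega
  have hmod (m : ℕ) : (m * a + r) % a = r := by simp [Nat.mod_eq_of_lt hra]
  have hrange_sub : (Set.range fun m : ℕ => iota (m * a + r) * a + (m * a + r)) ⊆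
      {x | x ∈ AddSubmonoid.closure (shiftedSquares a) ∧ x % a = r} := by
    rintro _ ⟨m, rfl⟩
    exact ⟨iota_mul_add_self_mem_closure a _, by simp [hmod]⟩
  refine le_antisymm (csInf_le_csInf' (Set.range_nonempty _) hrange_sub) ?_
  refine le_csInf ⟨_, hrange_sub ⟨0, rfl⟩⟩ ?_
  rintro x ⟨hx, hxr⟩
  obtain ⟨q, hq, hqx⟩ := exists_iota_mul_add_self_le_of_mem_closure hx
  have hq_eq : q / a * a + r = q := by rw [← hxr, ← hq, Nat.div_add_mod']
  calc sInf (Set.range fun m : ℕ => iota (m * a + r) * a + (m * a + r))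
      ≤ iota q * a + q := Nat.sInf_le ⟨q / a, by simp only [hq_eq]⟩
    _ ≤ x := hqx

theorem stmt3 (a : ℕ) (ha : 2 ≤ a) :
    ∀ r : ℕ, 1 ≤ r → r ≤ a - 1 →
      Nr (({a} : Set ℕ) ∪ {n : ℕ | ∃ i : ℕ, 0 < i ∧ n = a + i ^ 2}) a r
        = sInf (Set.range fun m : ℕ => iota (m * a + r) * a + (m * a + r)) :=
  stmt3_general a
end

section
/- Let a > 2 and let S = {a} ∪ {a + i² : i a positive integer}. If there exists r with 1 ≤ r ≤ a−1 such that ι(r) = 4, ι(a + r) ≥ 3, and ι(2a + r) ≥ 2, then the Frobenius number satisfies g(S) = 3a + max{ r : 1 ≤ r ≤ a−1, ι(r) = 4, ι(a + r) ≥ 3, ι(2a + r) ≥ 2 }. -/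
lemma exists_sum_sq_eq_of_le {s k m : ℕ} (hsk : s ≤ k)
    (h : ∃ c : Fin s → ℕ, ∑ i, c i ^ 2 = m) : ∃ c : Fin k → ℕ, ∑ i, c i ^ 2 = m := by
  obtain ⟨d, rfl⟩ := Nat.exists_eq_add_of_le hsk
  obtain ⟨c, rfl⟩ := h
  exact ⟨Fin.append c 0, by simp [Fin.sum_univ_add]⟩

lemma exists_pos_sum_sq_eq {k : ℕ} (c : Fin k → ℕ) :
    ∃ s ≤ k, ∃ c' : Fin s → ℕ, (∀ i, 0 < c' i) ∧ ∑ i, c' i ^ 2 = ∑ i, c i ^ 2 := by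
  set t := Finset.univ.filter fun i ↦ c i ≠ 0
  refine ⟨t.card, Finset.card_le_univ t |>.trans_eq (Fintype.card_fin k),
    fun j ↦ c (t.equivFin.symm j), fun j ↦ ?_, ?_⟩
  · exact Nat.pos_of_ne_zero (Finset.mem_filter.1 (t.equivFin.symm j).2).2
  · rw [Equiv.sum_comp t.equivFin.symm (fun x ↦ c x ^ 2),
      Finset.sum_coe_sort t (fun i ↦ c i ^ 2)]
    exact Finset.sum_filter_of_ne fun i _ hi ↦ by simpa using hi

-- Zero squares may be padded in or dropped, so `iota` is also the least number of squares of
-- nonnegative integers.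
lemma iota_le_iff {k m : ℕ} : iota m ≤ k ↔ ∃ c : Fin k → ℕ, ∑ i, c i ^ 2 = m := by
  constructor
  · intro hk
    have hne : {s | ∃ c : Fin s → ℕ, (∀ i, 0 < c i) ∧ ∑ i, c i ^ 2 = m}.Nonempty := by
      obtain ⟨a, b, c, d, h⟩ := Nat.sum_four_squares m
      obtain ⟨s, -, hs⟩ := exists_pos_sum_sq_eq ![a, b, c, d]
      exact ⟨s, by simpa [Fin.sum_univ_four, h] using hs⟩
    exact exists_sum_sq_eq_of_le hk ((Nat.sInf_mem hne).imp fun _ ↦ And.right)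
  · rintro ⟨c, rfl⟩
    obtain ⟨s, hsk, hs⟩ := exists_pos_sum_sq_eq c
    exact (Nat.sInf_le hs).trans hsk

lemma iota_le_four (m : ℕ) : iota m ≤ 4 := by
  obtain ⟨a, b, c, d, h⟩ := Nat.sum_four_squares m
  exact iota_le_iff.2 ⟨![a, b, c, d], by simp [Fin.sum_univ_four, h]⟩

lemma iota_pos {m : ℕ} (hm : 0 < m) : 0 < iota m := by
  by_contra! h
  obtain ⟨c, hc⟩ := iota_le_iff.1 h
  simp [← hc] at hm

abbrev shiftedSquaresMonoid (a : ℕ) : AddSubmonoid ℕ :=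
  AddSubmonoid.closure (({a} : Set ℕ) ∪ {n : ℕ | ∃ i : ℕ, 0 < i ∧ n = a + i ^ 2})

-- The generators are the `a + i ^ 2` with `i ≥ 0`, so a sum of `k` of them is `k * a` plus a sum
-- of `k` squares.
lemma mem_shiftedSquaresMonoid_iff {a n : ℕ} :
    n ∈ shiftedSquaresMonoid a ↔ ∃ k m, n = k * a + m ∧ iota m ≤ k := by
  simp only [iota_le_iff]
  constructor
  · intro h
    induction h using AddSubmonoid.closure_induction with
    | mem x hx =>
      rcases hx with rfl | ⟨i, -, rfl⟩
      · exact ⟨1, 0, by simp, 0, by simp⟩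
      · exact ⟨1, i ^ 2, by simp, fun _ ↦ i, by simp⟩
    | zero => exact ⟨0, 0, by simp, 0, by simp⟩
    | add x y _ _ ihx ihy =>
      obtain ⟨k₁, -, rfl, c₁, rfl⟩ := ihx
      obtain ⟨k₂, -, rfl, c₂, rfl⟩ := ihy
      refine ⟨k₁ + k₂, _, ?_, Fin.append c₁ c₂, rfl⟩
      simp only [Fin.sum_univ_add, Fin.append_left, Fin.append_right]
      ring
  · rintro ⟨k, -, rfl, c, rfl⟩
    have hsum : k * a + ∑ i, c i ^ 2 = ∑ i : Fin k, (a + c i ^ 2) := by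
      simp [Finset.sum_add_distrib]
    rw [hsum]
    refine AddSubmonoid.sum_mem _ fun i _ ↦ AddSubmonoid.subset_closure ?_
    rcases (c i).eq_zero_or_pos with h | h
    · left; simp [h]
    · right; exact ⟨c i, h, rfl⟩

lemma mem_shiftedSquaresMonoid_of_four_mul_le {a n : ℕ} (ha : 0 < a) (hn : 4 * a ≤ n) :
    n ∈ shiftedSquaresMonoid a := by
  refine mem_shiftedSquaresMonoid_iff.2 ⟨n / a, n % a, by rw [mul_comm, Nat.div_add_mod], ?_⟩
  calc iota (n % a) ≤ 4 := iota_le_four _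
    _ ≤ n / a := (Nat.le_div_iff_mul_le ha).2 hn

lemma three_mul_add_mem_shiftedSquaresMonoid_iff {a r : ℕ} (hra : r < a) :
    3 * a + r ∈ shiftedSquaresMonoid a ↔ iota r ≤ 3 ∨ iota (a + r) ≤ 2 ∨ iota (2 * a + r) ≤ 1 := by
  rw [mem_shiftedSquaresMonoid_iff]
  constructor
  · rintro ⟨k, m, hkm, hm⟩
    have hk : k < 4 := by
      by_contra! hk
      have := Nat.mul_le_mul_right a hk
      omega
    interval_cases k
    · have := iota_pos (m := m) (by omega)
      omega
    · obtain rfl : m = 2 * a + r := by omega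
      exact Or.inr (Or.inr hm)
    · obtain rfl : m = a + r := by omega
      exact Or.inr (Or.inl hm)
    · obtain rfl : m = r := by omega
      exact Or.inl hm
  · rintro (h | h | h)
    · exact ⟨3, r, rfl, h⟩
    · exact ⟨2, a + r, by ring, h⟩
    · exact ⟨1, 2 * a + r, by ring, h⟩

theorem stmt4_general (a : ℕ)
    (hex : ∃ r : ℕ, 1 ≤ r ∧ r ≤ a - 1 ∧ iota r = 4 ∧ 3 ≤ iota (a + r) ∧ 2 ≤ iota (2 * a + r)) :
    IsGreatest
      {n : ℕ | n ∉ AddSubmonoid.closure (({a} : Set ℕ) ∪ {n : ℕ | ∃ i : ℕ, 0 < i ∧ n = a + i ^ 2})}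
      (3 * a + sSup {r : ℕ | 1 ≤ r ∧ r ≤ a - 1 ∧ iota r = 4 ∧ 3 ≤ iota (a + r) ∧
        2 ≤ iota (2 * a + r)}) := by
  set R := {r : ℕ | 1 ≤ r ∧ r ≤ a - 1 ∧ iota r = 4 ∧ 3 ≤ iota (a + r) ∧ 2 ≤ iota (2 * a + r)}
  have hbdd : BddAbove R := ⟨a - 1, fun r hr ↦ hr.2.1⟩
  obtain ⟨hr₁, hra, hr, hr₂, hr₃⟩ : sSup R ∈ R := Nat.sSup_mem hex hbdd
  refine ⟨fun h ↦ ?_, fun n hn ↦ ?_⟩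
  · rcases (three_mul_add_mem_shiftedSquaresMonoid_iff (by omega)).1 h with h | h | h <;> omega
  · by_contra! hlt
    by_cases h4 : 4 * a ≤ n
    · exact hn (mem_shiftedSquaresMonoid_of_four_mul_le (by omega) h4)
    obtain ⟨m, rfl⟩ : ∃ m, n = 3 * a + m := ⟨n - 3 * a, by omega⟩
    refine hn ((three_mul_add_mem_shiftedSquaresMonoid_iff (by omega)).2 ?_)
    by_contra! hm
    have : m ≤ sSup R :=
      le_csSup hbdd ⟨by omega, by omega, le_antisymm (iota_le_four m) hm.1, hm.2.1, hm.2.2⟩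
    omega

theorem stmt4 (a : ℕ) (ha : 2 < a)
    (hex : ∃ r : ℕ, 1 ≤ r ∧ r ≤ a - 1 ∧ iota r = 4 ∧ 3 ≤ iota (a + r) ∧ 2 ≤ iota (2 * a + r)) :
    IsGreatest
      {n : ℕ | n ∉ AddSubmonoid.closure (({a} : Set ℕ) ∪ {n : ℕ | ∃ i : ℕ, 0 < i ∧ n = a + i ^ 2})}
      (3 * a + sSup {r : ℕ | 1 ≤ r ∧ r ≤ a - 1 ∧ iota r = 4 ∧ 3 ≤ iota (a + r) ∧
        2 ≤ iota (2 * a + r)}) :=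
  stmt4_general a hex
end

section
/- Assume the strong Goldbach conjecture: every even integer greater than 2 is the sum of two primes. Then for every positive integer n: τ(n) = 1 if n ∈ 𝒫𝒩 ∪ {1}; τ(n) = 3 if n is odd and neither n nor n − 2 belongs to 𝒫𝒩 ∪ {1}; and τ(n) = 2 in all other cases. -/
/-! Under Goldbach every even `n ≥ 2` is a sum of two terms from `𝒫𝒩 ∪ {1}` (`2 = 1 + 1`), hence
every odd `n ≥ 3` is a sum of three (`n = 1 + (n - 1)`), so `τ(n) ≤ 3` always. Conversely the
only even element of `𝒫𝒩 ∪ {1}` is `2`, so an odd `n` is a sum of two such terms exactly when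
`n - 2 ∈ 𝒫𝒩 ∪ {1}`. -/

/-- `tau n` is the least `s` such that `n` is a sum of `s` terms, each a prime or `1`. -/
noncomputable def tau (n : ℕ) : ℕ :=
  sInf {s : ℕ | ∃ c : Fin s → ℕ, (∀ i, Nat.Prime (c i) ∨ c i = 1) ∧ ∑ i, c i = n}

def GoldbachConjecture : Prop :=
  ∀ n : ℕ, Even n → 2 < n → ∃ p q : ℕ, Nat.Prime p ∧ Nat.Prime q ∧ n = p + q

def IsSumOfPrimesOrOnes (n s : ℕ) : Prop :=
  ∃ c : Fin s → ℕ, (∀ i, Nat.Prime (c i) ∨ c i = 1) ∧ ∑ i, c i = n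

theorem tau_eq_of_isSumOfPrimesOrOnes {n k : ℕ} (hk : IsSumOfPrimesOrOnes n k)
    (hlt : ∀ m < k, ¬IsSumOfPrimesOrOnes n m) : tau n = k :=
  le_antisymm (Nat.sInf_le hk) (le_csInf ⟨k, hk⟩ fun m hm => not_lt.1 fun h => hlt m h hm)

theorem isSumOfPrimesOrOnes_zero_iff {n : ℕ} : IsSumOfPrimesOrOnes n 0 ↔ n = 0 := by
  simp [IsSumOfPrimesOrOnes, eq_comm]

theorem isSumOfPrimesOrOnes_one_iff {n : ℕ} :
    IsSumOfPrimesOrOnes n 1 ↔ Nat.Prime n ∨ n = 1 := by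
  constructor
  · rintro ⟨c, hc, rfl⟩
    simpa using hc 0
  · exact fun h => ⟨fun _ => n, fun _ => h, by simp⟩

theorem isSumOfPrimesOrOnes_two_iff {n : ℕ} :
    IsSumOfPrimesOrOnes n 2 ↔
      ∃ a b, (Nat.Prime a ∨ a = 1) ∧ (Nat.Prime b ∨ b = 1) ∧ a + b = n := by
  constructor
  · rintro ⟨c, hc, rfl⟩
    exact ⟨c 0, c 1, hc 0, hc 1, (Fin.sum_univ_two c).symm⟩
  · rintro ⟨a, b, ha, hb, rfl⟩
    exact ⟨![a, b], fun i => by fin_cases i <;> assumption, by simp⟩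

theorem IsSumOfPrimesOrOnes.add {a b s t : ℕ} (ha : IsSumOfPrimesOrOnes a s)
    (hb : IsSumOfPrimesOrOnes b t) : IsSumOfPrimesOrOnes (a + b) (s + t) := by
  obtain ⟨c, hc, rfl⟩ := ha
  obtain ⟨d, hd, rfl⟩ := hb
  refine ⟨Fin.append c d, fun i => ?_, by simp [Fin.sum_univ_add]⟩
  induction i using Fin.addCases <;> simp [hc, hd]

theorem eq_two_of_even_of_prime_or_one {p : ℕ} (hp : Nat.Prime p ∨ p = 1) (he : Even p) :
    p = 2 := by
  rcases hp with hp | rfl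
  · exact hp.even_iff.mp he
  · exact absurd he Nat.not_even_one

theorem prime_or_one_sub_two_of_odd {n : ℕ} (hodd : Odd n) (h : IsSumOfPrimesOrOnes n 2) :
    Nat.Prime (n - 2) ∨ n - 2 = 1 := by
  obtain ⟨a, b, ha, hb, rfl⟩ := isSumOfPrimesOrOnes_two_iff.mp h
  rcases Nat.even_or_odd b with hbe | hbo
  · obtain rfl := eq_two_of_even_of_prime_or_one hb hbe
    simpa using ha
  · obtain rfl := eq_two_of_even_of_prime_or_one ha ((Nat.odd_add'.mp hodd).mp hbo)
    simpa [add_comm] using hb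

theorem isSumOfPrimesOrOnes_two_of_even (goldbach : GoldbachConjecture) {n : ℕ} (he : Even n)
    (h2 : 2 ≤ n) : IsSumOfPrimesOrOnes n 2 := by
  rcases h2.eq_or_lt with rfl | h2
  · exact isSumOfPrimesOrOnes_two_iff.mpr ⟨1, 1, Or.inr rfl, Or.inr rfl, rfl⟩
  · obtain ⟨p, q, hp, hq, rfl⟩ := goldbach n he h2
    exact isSumOfPrimesOrOnes_two_iff.mpr ⟨p, q, Or.inl hp, Or.inl hq, rfl⟩

theorem isSumOfPrimesOrOnes_two_of_prime_or_one_sub_two {n : ℕ}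
    (h : Nat.Prime (n - 2) ∨ n - 2 = 1) : IsSumOfPrimesOrOnes n 2 := by
  have h3 : 3 ≤ n := by
    rcases h with h | h
    · have := h.two_le; omega
    · omega
  exact isSumOfPrimesOrOnes_two_iff.mpr ⟨2, n - 2, Or.inl Nat.prime_two, h, by omega⟩

theorem isSumOfPrimesOrOnes_three_of_odd (goldbach : GoldbachConjecture) {n : ℕ} (hodd : Odd n)
    (h3 : 3 ≤ n) : IsSumOfPrimesOrOnes n 3 := by
  have hsum : IsSumOfPrimesOrOnes (1 + (n - 1)) (1 + 2) :=
    (isSumOfPrimesOrOnes_one_iff.mpr (Or.inr rfl)).add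
      (isSumOfPrimesOrOnes_two_of_even goldbach (Nat.Odd.sub_odd hodd odd_one) (by omega))
  rwa [Nat.add_sub_cancel' (by omega)] at hsum

theorem stmt6
    (goldbach : ∀ n : ℕ, Even n → 2 < n → ∃ p q : ℕ, Nat.Prime p ∧ Nat.Prime q ∧ n = p + q)
    (n : ℕ) (hn : 0 < n) :
    ((Nat.Prime n ∨ n = 1) → tau n = 1) ∧
    (Odd n ∧ ¬(Nat.Prime n ∨ n = 1) ∧ ¬(Nat.Prime (n - 2) ∨ n - 2 = 1) → tau n = 3) ∧
    (¬(Nat.Prime n ∨ n = 1) ∧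
      ¬(Odd n ∧ ¬(Nat.Prime n ∨ n = 1) ∧ ¬(Nat.Prime (n - 2) ∨ n - 2 = 1)) → tau n = 2) := by
  have h0 : ¬IsSumOfPrimesOrOnes n 0 := by rw [isSumOfPrimesOrOnes_zero_iff]; omega
  refine ⟨fun h => ?_, fun ⟨hodd, hn1, hn2⟩ => ?_, fun ⟨hn1, hn2⟩ => ?_⟩
  · refine tau_eq_of_isSumOfPrimesOrOnes (isSumOfPrimesOrOnes_one_iff.mpr h) fun m hm => ?_
    interval_cases m; exact h0
  · have h1 : ¬IsSumOfPrimesOrOnes n 1 := isSumOfPrimesOrOnes_one_iff.not.mpr hn1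
    have h2 : ¬IsSumOfPrimesOrOnes n 2 := mt (prime_or_one_sub_two_of_odd hodd) hn2
    have h3 : 3 ≤ n := by
      have : n ≠ 1 := fun h => hn1 (Or.inr h)
      obtain ⟨k, rfl⟩ := hodd
      omega
    refine tau_eq_of_isSumOfPrimesOrOnes (isSumOfPrimesOrOnes_three_of_odd goldbach hodd h3)
      fun m hm => ?_
    interval_cases m <;> assumption
  · have h1 : ¬IsSumOfPrimesOrOnes n 1 := isSumOfPrimesOrOnes_one_iff.not.mpr hn1
    have h2 : IsSumOfPrimesOrOnes n 2 := by
      rcases Nat.even_or_odd n with he | hodd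
      · exact isSumOfPrimesOrOnes_two_of_even goldbach he (by obtain ⟨k, rfl⟩ := he; omega)
      · exact isSumOfPrimesOrOnes_two_of_prime_or_one_sub_two (by tauto)
    refine tau_eq_of_isSumOfPrimesOrOnes h2 fun m hm => ?_
    interval_cases m <;> assumption
end

section
/- Assume the strong Goldbach conjecture: every even integer greater than 2 is the sum of two primes (this guarantees τ(n) ≤ 3 for all positive integers n). Let a > 44 and let S = {a} ∪ {a + 1} ∪ {a + p : p prime}. Then the set { r : 1 ≤ r ≤ a−1, τ(r) = 3, τ(a + r) ≥ 2 } is nonempty, and the Frobenius number satisfies g(S) = 2a + max{ r : 1 ≤ r ≤ a−1, τ(r) = 3, τ(a + r) ≥ 2 }. -/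
def tauLengths (n : ℕ) : Set ℕ :=
  {s : ℕ | ∃ c : Fin s → ℕ, (∀ i, Nat.Prime (c i) ∨ c i = 1) ∧ ∑ i, c i = n}

namespace tauLengths

variable {n : ℕ}

lemma self_mem (n : ℕ) : n ∈ tauLengths n :=
  ⟨fun _ => 1, fun _ => Or.inr rfl, by simp⟩

lemma zero_mem_iff : 0 ∈ tauLengths n ↔ n = 0 := by
  refine ⟨fun ⟨c, _, hsum⟩ => by simpa using hsum.symm, ?_⟩
  rintro rfl
  exact ⟨Fin.elim0, fun i => i.elim0, by simp⟩

lemma one_mem_iff : 1 ∈ tauLengths n ↔ n.Prime ∨ n = 1 := by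
  refine ⟨fun ⟨c, hc, hsum⟩ => by simpa [← hsum] using hc 0, fun h => ?_⟩
  exact ⟨fun _ => n, fun _ => h, by simp⟩

lemma two_mem_iff :
    2 ∈ tauLengths n ↔ ∃ p q, (p.Prime ∨ p = 1) ∧ (q.Prime ∨ q = 1) ∧ p + q = n := by
  constructor
  · rintro ⟨c, hc, hsum⟩
    exact ⟨c 0, c 1, hc 0, hc 1, by simpa [Fin.sum_univ_two] using hsum⟩
  · rintro ⟨p, q, hp, hq, rfl⟩
    refine ⟨![p, q], fun i => ?_, by simp [Fin.sum_univ_two]⟩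
    fin_cases i <;> assumption

end tauLengths

lemma tau_mem_tauLengths (n : ℕ) : tau n ∈ tauLengths n :=
  Nat.sInf_mem ⟨n, tauLengths.self_mem n⟩

lemma tau_le_of_mem_tauLengths {n s : ℕ} (h : s ∈ tauLengths n) : tau n ≤ s :=
  Nat.sInf_le h

lemma tau_eq_zero_iff {n : ℕ} : tau n = 0 ↔ n = 0 := by
  refine ⟨fun h => ?_, fun h => ?_⟩
  · simpa [h, tauLengths.zero_mem_iff] using tau_mem_tauLengths n
  · exact Nat.le_zero.mp (tau_le_of_mem_tauLengths (tauLengths.zero_mem_iff.mpr h))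

@[simp]
lemma tau_zero : tau 0 = 0 :=
  tau_eq_zero_iff.mpr rfl

lemma tau_le_one_iff {n : ℕ} : tau n ≤ 1 ↔ n.Prime ∨ n ≤ 1 := by
  constructor
  · intro h
    have hmem := tau_mem_tauLengths n
    interval_cases hτ : tau n
    · rw [tauLengths.zero_mem_iff] at hmem; omega
    · rw [tauLengths.one_mem_iff] at hmem; exact hmem.imp_right le_of_eq
  · rintro (hp | hn)
    · exact tau_le_of_mem_tauLengths (tauLengths.one_mem_iff.mpr (Or.inl hp))
    · interval_cases n
      · simp
      · exact tau_le_of_mem_tauLengths (tauLengths.one_mem_iff.mpr (Or.inr rfl))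

lemma tau_add_le (m n : ℕ) : tau (m + n) ≤ tau m + tau n := by
  obtain ⟨cm, hcm, hsm⟩ := tau_mem_tauLengths m
  obtain ⟨cn, hcn, hsn⟩ := tau_mem_tauLengths n
  refine tau_le_of_mem_tauLengths ⟨Fin.append cm cn, Fin.addCases (by simpa) (by simpa), ?_⟩
  simp [Fin.sum_univ_add, hsm, hsn]

lemma tau_le_two_of_even (goldbach : GoldbachConjecture) {n : ℕ} (hn : Even n) : tau n ≤ 2 := by
  rcases lt_or_ge 2 n with h2 | h2
  · obtain ⟨p, q, hp, hq, rfl⟩ := goldbach n hn h2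
    exact tau_le_of_mem_tauLengths (tauLengths.two_mem_iff.mpr ⟨p, q, .inl hp, .inl hq, rfl⟩)
  · refine (tau_le_one_iff.mpr ?_).trans one_le_two
    interval_cases n <;> norm_num

lemma tau_le_three (goldbach : GoldbachConjecture) (n : ℕ) : tau n ≤ 3 := by
  rcases Nat.even_or_odd n with hn | hn
  · exact (tau_le_two_of_even goldbach hn).trans (by norm_num)
  · obtain ⟨k, rfl⟩ := hn
    calc tau (2 * k + 1) ≤ tau (2 * k) + tau 1 := tau_add_le _ _
      _ ≤ 2 + 1 := add_le_add (tau_le_two_of_even goldbach (even_two_mul k))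
          (tau_le_one_iff.mpr (.inr le_rfl))

lemma three_le_tau_of_odd {n : ℕ} (hn : Odd n) (h1 : n ≠ 1) (hp : ¬ n.Prime)
    (hp2 : ¬ (n - 2).Prime) : 3 ≤ tau n := by
  by_contra! h
  obtain h | h : tau n ≤ 1 ∨ tau n = 2 := by omega
  · rcases tau_le_one_iff.mp h with hn' | hn'
    · exact hp hn'
    · obtain ⟨k, rfl⟩ := hn; omega
  have hmem := tau_mem_tauLengths n
  rw [h, tauLengths.two_mem_iff] at hmem
  obtain ⟨p, q, hp', hq', rfl⟩ := hmem
  -- in an odd sum of two primes-or-one, the even summand is `2`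
  have of_even : ∀ x y, (x.Prime ∨ x = 1) → (y.Prime ∨ y = 1) → Even x →
      ¬ (x + y).Prime → ¬ (x + y - 2).Prime → False := by
    rintro x y (hx | rfl) hy hxe hxy hxy2
    · obtain rfl := hx.even_iff.mp hxe
      rcases hy with hy | rfl
      · exact hxy2 (by simpa using hy)
      · exact hxy (by norm_num)
    · exact absurd hxe (by decide)
  rcases Nat.even_or_odd p with hpe | hpo
  · exact of_even p q hp' hq' hpe hp hp2
  · exact of_even q p hq' hp' (Nat.odd_add.mp hn |>.mp hpo)
      (by rwa [add_comm]) (by rwa [add_comm])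

def shiftedPrimes (a : ℕ) : Set ℕ :=
  ({a} : Set ℕ) ∪ {a + 1} ∪ {n : ℕ | ∃ p : ℕ, Nat.Prime p ∧ n = a + p}

lemma mem_shiftedPrimes_iff {a x : ℕ} : x ∈ shiftedPrimes a ↔ ∃ t, x = a + t ∧ tau t ≤ 1 := by
  simp only [shiftedPrimes, Set.mem_union, Set.mem_singleton_iff, Set.mem_ofPred_eq,
    tau_le_one_iff]
  constructor
  · rintro ((rfl | rfl) | ⟨p, hp, rfl⟩)
    exacts [⟨0, by simp⟩, ⟨1, rfl, by simp⟩, ⟨p, rfl, .inl hp⟩]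
  · rintro ⟨t, rfl, ht | ht⟩
    · exact .inr ⟨t, ht, rfl⟩
    · interval_cases t <;> simp

lemma mem_closure_shiftedPrimes_iff {a n : ℕ} :
    n ∈ AddSubmonoid.closure (shiftedPrimes a) ↔ ∃ k m, n = k * a + m ∧ tau m ≤ k := by
  constructor
  · intro hn
    induction hn using AddSubmonoid.closure_induction with
    | mem x hx =>
      obtain ⟨t, rfl, ht⟩ := mem_shiftedPrimes_iff.mp hx
      exact ⟨1, t, by ring, ht⟩
    | zero => exact ⟨0, 0, by ring, by simp⟩
    | add x y _ _ hx hy =>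
      obtain ⟨k, m, rfl, hkm⟩ := hx
      obtain ⟨l, m', rfl, hlm⟩ := hy
      exact ⟨k + l, m + m', by ring, (tau_add_le m m').trans (add_le_add hkm hlm)⟩
  · rintro ⟨k, m, rfl, hkm⟩
    obtain ⟨c, hc, hcm⟩ := tau_mem_tauLengths m
    have hsum : ∑ i, (a + c i) ∈ AddSubmonoid.closure (shiftedPrimes a) :=
      AddSubmonoid.sum_mem _ fun i _ => AddSubmonoid.subset_closure
        (mem_shiftedPrimes_iff.mpr ⟨c i, rfl, tau_le_one_iff.mpr ((hc i).imp_right le_of_eq)⟩)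
    have ha : (k - tau m) • a ∈ AddSubmonoid.closure (shiftedPrimes a) :=
      nsmul_mem (AddSubmonoid.subset_closure (mem_shiftedPrimes_iff.mpr ⟨0, by simp⟩)) _
    convert add_mem hsum ha using 1
    rw [Finset.sum_add_distrib, hcm, Finset.sum_const, Finset.card_univ, Fintype.card_fin,
      smul_eq_mul, smul_eq_mul, add_right_comm, ← add_mul, Nat.add_sub_cancel' hkm]

section Frobenius

variable {a : ℕ}

lemma two_mul_add_mem_closure_shiftedPrimes_iff {r : ℕ} (hr : r < a) :
    2 * a + r ∈ AddSubmonoid.closure (shiftedPrimes a) ↔ tau r ≤ 2 ∨ tau (a + r) ≤ 1 := by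
  rw [mem_closure_shiftedPrimes_iff]
  constructor
  · rintro ⟨k, m, hkm, hτ⟩
    have hk : k ≤ 2 := by
      by_contra! hk
      have : 3 * a ≤ k * a := Nat.mul_le_mul_right a hk
      omega
    interval_cases k
    · rw [Nat.le_zero, tau_eq_zero_iff] at hτ
      omega
    · exact .inr (by rwa [show a + r = m by omega])
    · exact .inl (by rwa [show r = m by omega])
  · rintro (h | h)
    exacts [⟨2, r, rfl, h⟩, ⟨1, a + r, by ring, h⟩]

lemma mem_closure_shiftedPrimes_of_three_mul_le (goldbach : GoldbachConjecture) {n : ℕ}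
    (hn : 3 * a ≤ n) : n ∈ AddSubmonoid.closure (shiftedPrimes a) :=
  mem_closure_shiftedPrimes_iff.mpr
    ⟨3, n - 3 * a, (Nat.add_sub_cancel' hn).symm, tau_le_three goldbach _⟩

def frobeniusResidues (a : ℕ) : Set ℕ :=
  {r : ℕ | 1 ≤ r ∧ r ≤ a - 1 ∧ tau r = 3 ∧ 2 ≤ tau (a + r)}

lemma two_mul_add_notMem_closure_shiftedPrimes_iff (goldbach : GoldbachConjecture) {r : ℕ}
    (hr0 : 0 < r) (hr : r < a) :
    2 * a + r ∉ AddSubmonoid.closure (shiftedPrimes a) ↔ r ∈ frobeniusResidues a := by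
  have := tau_le_three goldbach r
  simp only [two_mul_add_mem_closure_shiftedPrimes_iff hr, frobeniusResidues, Set.mem_ofPred_eq]
  omega

lemma isGreatest_notMem_closure_shiftedPrimes (goldbach : GoldbachConjecture)
    (hne : (frobeniusResidues a).Nonempty) :
    IsGreatest {n | n ∉ AddSubmonoid.closure (shiftedPrimes a)}
      (2 * a + sSup (frobeniusResidues a)) := by
  have hbdd : BddAbove (frobeniusResidues a) := ⟨a - 1, fun r hr => hr.2.1⟩
  have hmem := Nat.sSup_mem hne hbdd
  have hR : sSup (frobeniusResidues a) < a := by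
    obtain ⟨h1, hle, -⟩ := hmem
    omega
  refine ⟨(two_mul_add_notMem_closure_shiftedPrimes_iff goldbach hmem.1 hR).mpr hmem, ?_⟩
  intro n hn
  by_contra! hlt
  have h3 : n < 3 * a := by
    by_contra! h3
    exact hn (mem_closure_shiftedPrimes_of_three_mul_le goldbach h3)
  obtain ⟨r, rfl⟩ : ∃ r, n = 2 * a + r := ⟨n - 2 * a, by omega⟩
  have hr := (two_mul_add_notMem_closure_shiftedPrimes_iff goldbach (by omega) (by omega)).mp hn
  have := le_csSup hbdd hr
  omega

end Frobenius

lemma exists_lt_not_prime_add (a : ℕ) (ha : 44 < a) :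
    ∃ r ∈ ({27, 35, 51, 57, 121} : Finset ℕ), r < a ∧ ¬ (a + r).Prime := by
  by_cases h27 : (a + 27).Prime
  swap
  · exact ⟨27, by simp, by omega, h27⟩
  by_cases h35 : (a + 35).Prime
  swap
  · exact ⟨35, by simp, by omega, h35⟩
  have ha6 : a % 6 = 2 := by
    have h2 : ¬ 2 ∣ a + 27 := fun h => by
      have := (Nat.prime_dvd_prime_iff_eq Nat.prime_two h27).mp h; omega
    have h3 : ¬ 3 ∣ a + 27 := fun h => by
      have := (Nat.prime_dvd_prime_iff_eq Nat.prime_three h27).mp h; omega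
    have h3' : ¬ 3 ∣ a + 35 := fun h => by
      have := (Nat.prime_dvd_prime_iff_eq Nat.prime_three h35).mp h; omega
    omega
  by_cases hbig : 121 < a
  · exact ⟨121, by simp, hbig,
      Nat.not_prime_of_dvd_of_lt (m := 3) (by omega) (by norm_num) (by omega)⟩
  obtain ⟨k, rfl⟩ : ∃ k, a = 6 * k + 2 := ⟨a / 6, by omega⟩
  have hk1 : 8 ≤ k := by omega
  have hk2 : k ≤ 19 := by omega
  revert h27 h35
  interval_cases k <;> norm_num

lemma frobeniusResidues_nonempty (goldbach : GoldbachConjecture) {a : ℕ} (ha : 44 < a) :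
    (frobeniusResidues a).Nonempty := by
  obtain ⟨r, hr, hra, hp⟩ := exists_lt_not_prime_add a ha
  have hτ : tau r = 3 := by
    refine le_antisymm (tau_le_three goldbach r) ?_
    simp only [Finset.mem_insert, Finset.mem_singleton] at hr
    rcases hr with rfl | rfl | rfl | rfl | rfl <;>
      exact three_le_tau_of_odd (by decide) (by norm_num) (by norm_num) (by norm_num)
  have hr0 : 0 < r := Nat.pos_of_ne_zero (by rintro rfl; simp at hτ)
  refine ⟨r, hr0, by omega, hτ, ?_⟩
  by_contra! h
  rcases tau_le_one_iff.mp (Nat.le_of_lt_succ h) with h' | h'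
  exacts [hp h', by omega]

theorem stmt9
    (goldbach : ∀ n : ℕ, Even n → 2 < n → ∃ p q : ℕ, Nat.Prime p ∧ Nat.Prime q ∧ n = p + q)
    (a : ℕ) (ha : 44 < a) :
    {r : ℕ | 1 ≤ r ∧ r ≤ a - 1 ∧ tau r = 3 ∧ 2 ≤ tau (a + r)}.Nonempty ∧
    IsGreatest
      {n : ℕ | n ∉ AddSubmonoid.closure
        (({a} : Set ℕ) ∪ {a + 1} ∪ {n : ℕ | ∃ p : ℕ, Nat.Prime p ∧ n = a + p})}
      (2 * a + sSup {r : ℕ | 1 ≤ r ∧ r ≤ a - 1 ∧ tau r = 3 ∧ 2 ≤ tau (a + r)}) :=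
  have hne := frobeniusResidues_nonempty goldbach ha
  ⟨hne, isGreatest_notMem_closure_shiftedPrimes goldbach hne⟩
end

section
/- Let a > 2 and let S = {a} ∪ {a + 1} ∪ {a + p : p prime}. Then for every 1 ≤ r ≤ a−1, N_r = min over m ∈ ℕ of ( τ(ma + r)·a + (ma + r) ). -/
/-! Every element of `a + ({0, 1} ∪ primes)` is `a` plus at most one prime-or-one, so an element
of the generated monoid is `t * a` plus a sum of at most `t` primes-or-ones. Regrouping that sum
into `tau` of its value many terms can only lower `t`; hence the least element in a residue
class `r` is `tau k * a + k` for the best `k ≡ r`. -/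

theorem tau_le_card (L : Multiset ℕ) (hL : ∀ x ∈ L, Nat.Prime x ∨ x = 1) :
    tau L.sum ≤ Multiset.card L := by
  rw [← Multiset.length_toList, ← Multiset.sum_toList]
  exact Nat.sInf_le ⟨fun i => L.toList[i.1],
    fun i => hL _ (Multiset.mem_toList.mp (List.getElem_mem i.isLt)), Fin.sum_univ_getElem _⟩

theorem exists_multiset_card_eq_tau (n : ℕ) :
    ∃ L : Multiset ℕ, (∀ x ∈ L, Nat.Prime x ∨ x = 1) ∧ Multiset.card L = tau n ∧ L.sum = n := by
  have hne : {s : ℕ | ∃ c : Fin s → ℕ, (∀ i, Nat.Prime (c i) ∨ c i = 1) ∧ ∑ i, c i = n}.Nonempty :=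
    ⟨n, fun _ => 1, fun _ => Or.inr rfl, by simp⟩
  obtain ⟨c, hc, hsum⟩ := Nat.sInf_mem hne
  refine ⟨Finset.univ.val.map c, ?_, by simp [tau], hsum⟩
  simp only [Multiset.mem_map]
  rintro _ ⟨i, -, rfl⟩
  exact hc i

def shiftedPrimeSet (a : ℕ) : Set ℕ :=
  ({a} : Set ℕ) ∪ {a + 1} ∪ {n : ℕ | ∃ p : ℕ, Nat.Prime p ∧ n = a + p}

theorem mem_closure_shiftedPrimeSet_iff {a n : ℕ} :
    n ∈ AddSubmonoid.closure (shiftedPrimeSet a) ↔ ∃ (t : ℕ) (L : Multiset ℕ),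
      (∀ x ∈ L, Nat.Prime x ∨ x = 1) ∧ Multiset.card L ≤ t ∧ n = t * a + L.sum := by
  constructor
  · intro hn
    induction hn using AddSubmonoid.closure_induction with
    | mem x hx =>
      rcases hx with (hx | hx) | ⟨p, hp, rfl⟩
      · exact ⟨1, 0, by simp, by simp, by simpa using hx⟩
      · exact ⟨1, {1}, by simp, by simp, by simpa using hx⟩
      · exact ⟨1, {p}, by simp [hp], by simp, by simp⟩
    | zero => exact ⟨0, 0, by simp, by simp, by simp⟩
    | add x y _ _ ihx ihy =>
      obtain ⟨t₁, L₁, h₁, hc₁, rfl⟩ := ihx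
      obtain ⟨t₂, L₂, h₂, hc₂, rfl⟩ := ihy
      refine ⟨t₁ + t₂, L₁ + L₂, ?_, by simpa using Nat.add_le_add hc₁ hc₂, by simp; ring⟩
      simp only [Multiset.mem_add]
      rintro x (hx | hx)
      exacts [h₁ x hx, h₂ x hx]
  · rintro ⟨t, L, hL, hcard, rfl⟩
    have hshift : (L.map (a + ·)).sum ∈ AddSubmonoid.closure (shiftedPrimeSet a) := by
      refine multiset_sum_mem _ fun y hy => AddSubmonoid.subset_closure ?_
      obtain ⟨x, hx, rfl⟩ := Multiset.mem_map.mp hy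
      rcases hL x hx with hp | rfl
      exacts [Or.inr ⟨x, hp, rfl⟩, Or.inl (Or.inr rfl)]
    have ha : (t - Multiset.card L) • a ∈ AddSubmonoid.closure (shiftedPrimeSet a) :=
      AddSubmonoid.nsmul_mem _ 
        (AddSubmonoid.subset_closure (show a ∈ shiftedPrimeSet a from Or.inl (Or.inl rfl))) _
    convert add_mem hshift ha using 1
    rw [Multiset.sum_map_add, Multiset.map_const', Multiset.sum_replicate, Multiset.map_id',
      smul_eq_mul, smul_eq_mul]
    obtain ⟨d, rfl⟩ := Nat.exists_eq_add_of_le hcard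
    simp only [add_tsub_cancel_left]
    ring

theorem tau_mul_add_mem_closure (a k : ℕ) :
    tau k * a + k ∈ AddSubmonoid.closure (shiftedPrimeSet a) := by
  obtain ⟨L, hL, hcard, hsum⟩ := exists_multiset_card_eq_tau k
  exact mem_closure_shiftedPrimeSet_iff.mpr ⟨tau k, L, hL, hcard.le, by rw [hsum]⟩

theorem exists_tau_mul_add_le_of_mem_closure {a n : ℕ}
    (hn : n ∈ AddSubmonoid.closure (shiftedPrimeSet a)) :
    ∃ k, k % a = n % a ∧ tau k * a + k ≤ n := by
  obtain ⟨t, L, hL, hcard, rfl⟩ := mem_closure_shiftedPrimeSet_iff.mp hn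
  refine ⟨L.sum, by rw [Nat.mul_add_mod'], ?_⟩
  have := Nat.mul_le_mul_right a ((tau_le_card L hL).trans hcard)
  omega

theorem stmt10_general (a : ℕ) :
    ∀ r : ℕ, 1 ≤ r → r ≤ a - 1 →
      Nr (({a} : Set ℕ) ∪ {a + 1} ∪ {n : ℕ | ∃ p : ℕ, Nat.Prime p ∧ n = a + p}) a r
        = sInf (Set.range fun m : ℕ => tau (m * a + r) * a + (m * a + r)) := by
  intro r hr₁ hr₂
  have hra : r < a := by omega
  apply csInf_eq_csInf_of_forall_exists_le
  · rintro n ⟨hn, rfl⟩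
    obtain ⟨k, hk, hle⟩ := exists_tau_mul_add_le_of_mem_closure hn
    refine ⟨_, ⟨k / a, rfl⟩, ?_⟩
    dsimp only
    rwa [← hk, Nat.div_add_mod']
  · rintro _ ⟨m, rfl⟩
    refine ⟨_, ⟨tau_mul_add_mem_closure a _, ?_⟩, le_rfl⟩
    rw [Nat.mul_add_mod', Nat.mul_add_mod', Nat.mod_eq_of_lt hra]

theorem stmt10 (a : ℕ) (ha : 2 < a) :
    ∀ r : ℕ, 1 ≤ r → r ≤ a - 1 →
      Nr (({a} : Set ℕ) ∪ {a + 1} ∪ {n : ℕ | ∃ p : ℕ, Nat.Prime p ∧ n = a + p}) a r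
        = sInf (Set.range fun m : ℕ => tau (m * a + r) * a + (m * a + r)) :=
  stmt10_general a
end

section
/- For every positive integer k and every M ∈ ℕ, ⌈M/k²⌉ ≤ ι_k(M) ≤ ⌊M/k²⌋ + 4. -/
/-!
Writing `M = q k² + r` with `r < k²`, use the square `k²` exactly `q` times and write `r` as a sum
of four squares by Lagrange's theorem; each of these squares is at most `r < k²`, so its root lies
in `[0, k]`, and the zero squares are simply dropped. Conversely every admissible square is at most
`k²`, so `s` of them sum to at most `s k²`.
-/

/-- `iotaK k n` is the least number of squares `i²` with `1 ≤ i ≤ k` needed to write `n`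
as a sum of such squares (with `iotaK k 0 = 0`). -/
noncomputable def iotaK (k n : ℕ) : ℕ :=
  sInf {s : ℕ | ∃ x : Fin k → ℕ, ∑ i, x i * (i.1 + 1) ^ 2 = n ∧ ∑ i, x i = s}

def HasSquareRep (k n s : ℕ) : Prop :=
  ∃ x : Fin k → ℕ, ∑ i, x i * (i.1 + 1) ^ 2 = n ∧ ∑ i, x i = s

namespace HasSquareRep

variable {k n s : ℕ}

theorem add {m t : ℕ} (h₁ : HasSquareRep k n s) (h₂ : HasSquareRep k m t) :
    HasSquareRep k (n + m) (s + t) := by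
  obtain ⟨x, hxn, hxs⟩ := h₁
  obtain ⟨y, hym, hyt⟩ := h₂
  refine ⟨x + y, ?_, ?_⟩
  · simp only [Pi.add_apply, add_mul, Finset.sum_add_distrib, hxn, hym]
  · simp only [Pi.add_apply, Finset.sum_add_distrib, hxs, hyt]

theorem mul_sq (m : ℕ) {a : ℕ} (ha₀ : 0 < a) (hak : a ≤ k) : HasSquareRep k (m * a ^ 2) m := by
  refine ⟨fun j => if j.1 + 1 = a then m else 0, ?_, ?_⟩ <;>
  · rw [Finset.sum_eq_single ⟨a - 1, by omega⟩ (by grind) (by simp)]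
    simp [show a - 1 + 1 = a by omega]

theorem exists_sq_le_one {a : ℕ} (hak : a ≤ k) : ∃ e ≤ 1, HasSquareRep k (a ^ 2) e := by
  rcases Nat.eq_zero_or_pos a with rfl | ha₀
  · exact ⟨0, zero_le_one, 0, by simp, by simp⟩
  · exact ⟨1, le_rfl, by simpa using mul_sq 1 ha₀ hak⟩

theorem exists_le_four_of_lt_sq {r : ℕ} (hr : r < k ^ 2) : ∃ e ≤ 4, HasSquareRep k r e := by
  obtain ⟨a, b, c, d, habcd⟩ := Nat.sum_four_squares r
  have root_le {x : ℕ} (hx : x ^ 2 ≤ r) : x ≤ k :=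
    (lt_of_pow_lt_pow_left₀ 2 k.zero_le (hx.trans_lt hr)).le
  obtain ⟨ea, hea, ra⟩ := exists_sq_le_one (root_le (by omega : a ^ 2 ≤ r))
  obtain ⟨eb, heb, rb⟩ := exists_sq_le_one (root_le (by omega : b ^ 2 ≤ r))
  obtain ⟨ec, hec, rc⟩ := exists_sq_le_one (root_le (by omega : c ^ 2 ≤ r))
  obtain ⟨ed, hed, rd⟩ := exists_sq_le_one (root_le (by omega : d ^ 2 ≤ r))
  refine ⟨ea + eb + ec + ed, by omega, ?_⟩
  have h := ((ra.add rb).add rc).add rd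
  rwa [habcd] at h

theorem le_mul_sq (h : HasSquareRep k n s) : n ≤ s * k ^ 2 := by
  obtain ⟨x, hxn, hxs⟩ := h
  calc n = ∑ i, x i * (i.1 + 1) ^ 2 := hxn.symm
    _ ≤ ∑ i : Fin k, x i * k ^ 2 := by
        gcongr with i
        exact i.2
    _ = s * k ^ 2 := by rw [← Finset.sum_mul, hxs]

theorem iotaK_le (h : HasSquareRep k n s) : iotaK k n ≤ s :=
  Nat.sInf_le h

end HasSquareRep

theorem hasSquareRep_iotaK {k n s : ℕ} (h : HasSquareRep k n s) : HasSquareRep k n (iotaK k n) :=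
  Nat.sInf_mem (s := {s | HasSquareRep k n s}) ⟨s, h⟩

theorem exists_hasSquareRep_div_add (k M : ℕ) (hk : 0 < k) :
    ∃ e ≤ 4, HasSquareRep k M (M / k ^ 2 + e) := by
  obtain ⟨e, he, hr⟩ :=
    HasSquareRep.exists_le_four_of_lt_sq (Nat.mod_lt M (pow_pos hk 2) : M % k ^ 2 < k ^ 2)
  have h := (HasSquareRep.mul_sq (M / k ^ 2) hk le_rfl).add hr
  rw [Nat.div_add_mod'] at h
  exact ⟨e, he, h⟩

theorem stmt11 (k : ℕ) (hk : 0 < k) (M : ℕ) :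
    (M + k ^ 2 - 1) / k ^ 2 ≤ iotaK k M ∧ iotaK k M ≤ M / k ^ 2 + 4 := by
  obtain ⟨e, he, hM⟩ := exists_hasSquareRep_div_add k M hk
  constructor
  · have hle : M ≤ iotaK k M * k ^ 2 := (hasSquareRep_iotaK hM).le_mul_sq
    rw [Nat.div_le_iff_le_mul_add_pred (pow_pos hk 2), mul_comm]
    omega
  · exact hM.iotaK_le.trans (by omega)
end

section
/- Let k be a positive integer. For every positive integer r with r ≥ (⌈3k/2⌉ − 2)·k², one has ι_k(k² + r) = ι_k(r) + 1. -/
/-!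
Adding one part `k²` gives `ι_k(k² + r) ≤ ι_k(r) + 1`. Conversely, take an optimal
representation of `k² + r`. If it uses the part `k²`, deleting it represents `r` with one part
fewer. Otherwise every part is at most `(k - 1)²`, so `k² + r ≤ ι_k(k² + r) (k - 1)²`. Writing
`r = q k² + t` with `t < k²` a sum of four squares (Lagrange) gives `ι_k(k² + r) ≤ ι_k(r) ≤ q + 4`,
and `(q + 1) k² ≤ (q + 4) (k - 1)²` is impossible once `q ≥ ⌈3k/2⌉ - 2`.
-/

open Finset

variable {k : ℕ}

def sqSum (x : Fin k → ℕ) : ℕ := ∑ i, x i * (i.1 + 1) ^ 2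

lemma sqSum_add (x y : Fin k → ℕ) : sqSum (x + y) = sqSum x + sqSum y := by
  simp only [sqSum, Pi.add_apply, add_mul, sum_add_distrib]

lemma sqSum_single (a : Fin k) (c : ℕ) : sqSum (Pi.single a c) = c * (a.1 + 1) ^ 2 := by
  simp [sqSum, Pi.single_apply]

lemma sqSum_le_mul_sq {x : Fin k → ℕ} {m : ℕ} (hx : ∀ i : Fin k, m < i.1 + 1 → x i = 0) :
    sqSum x ≤ (∑ i, x i) * m ^ 2 := by
  rw [sum_mul]
  refine sum_le_sum fun i _ => ?_
  by_cases h : m < i.1 + 1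
  · simp [hx i h]
  · exact Nat.mul_le_mul_left _ (Nat.pow_le_pow_left (not_lt.1 h) 2)

lemma iotaK_le_sum (x : Fin k → ℕ) : iotaK k (sqSum x) ≤ ∑ i, x i :=
  Nat.sInf_le ⟨x, rfl, rfl⟩

lemma exists_sqSum_eq_iotaK (hk : 0 < k) (n : ℕ) :
    ∃ x : Fin k → ℕ, sqSum x = n ∧ ∑ i, x i = iotaK k n :=
  Nat.sInf_mem (s := {s | ∃ x : Fin k → ℕ, sqSum x = n ∧ ∑ i, x i = s})
    ⟨n, Pi.single ⟨0, hk⟩ n, by simp [sqSum_single], by simp⟩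

lemma iotaK_add_le (hk : 0 < k) (m n : ℕ) : iotaK k (m + n) ≤ iotaK k m + iotaK k n := by
  obtain ⟨x, rfl, hx⟩ := exists_sqSum_eq_iotaK hk m
  obtain ⟨y, rfl, hy⟩ := exists_sqSum_eq_iotaK hk n
  simpa [← sqSum_add, ← hx, ← hy, sum_add_distrib] using iotaK_le_sum (x + y)

lemma iotaK_mul_sq_le {a : ℕ} (ha : 0 < a) (hak : a ≤ k) (c : ℕ) : iotaK k (c * a ^ 2) ≤ c := by
  obtain ⟨b, rfl⟩ : ∃ b, a = b + 1 := ⟨a - 1, by omega⟩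
  simpa [sqSum_single] using iotaK_le_sum (Pi.single (⟨b, hak⟩ : Fin k) c)

lemma iotaK_sq_le_one {a : ℕ} (hak : a ≤ k) : iotaK k (a ^ 2) ≤ 1 := by
  rcases Nat.eq_zero_or_pos a with rfl | ha
  · have := iotaK_le_sum (0 : Fin k → ℕ)
    simp only [sqSum, Pi.zero_apply, zero_mul, sum_const_zero, nonpos_iff_eq_zero] at this
    simp [this]
  · simpa using iotaK_mul_sq_le ha hak 1

lemma iotaK_le_four (hk : 0 < k) {t : ℕ} (ht : t < (k + 1) ^ 2) : iotaK k t ≤ 4 := by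
  obtain ⟨a, b, c, d, rfl⟩ := Nat.sum_four_squares t
  have hsq : ∀ z, z ^ 2 ≤ a ^ 2 + b ^ 2 + c ^ 2 + d ^ 2 → iotaK k (z ^ 2) ≤ 1 := fun z hz =>
    iotaK_sq_le_one (Nat.lt_succ_iff.1 ((Nat.pow_lt_pow_iff_left two_ne_zero).1 (hz.trans_lt ht)))
  have ha := hsq a (by omega)
  have hb := hsq b (by omega)
  have hc := hsq c (by omega)
  have hd := hsq d (by omega)
  have := iotaK_add_le hk (a ^ 2 + b ^ 2 + c ^ 2) (d ^ 2)
  have := iotaK_add_le hk (a ^ 2 + b ^ 2) (c ^ 2)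
  have := iotaK_add_le hk (a ^ 2) (b ^ 2)
  omega

lemma iotaK_le_div_add_four (hk : 0 < k) (r : ℕ) : iotaK k r ≤ r / k ^ 2 + 4 := by
  have hmod : r % k ^ 2 < (k + 1) ^ 2 :=
    (Nat.mod_lt _ (by positivity)).trans (Nat.pow_lt_pow_left k.lt_succ_self two_ne_zero)
  calc iotaK k r = iotaK k (r / k ^ 2 * k ^ 2 + r % k ^ 2) := by rw [Nat.div_add_mod']
    _ ≤ iotaK k (r / k ^ 2 * k ^ 2) + iotaK k (r % k ^ 2) := iotaK_add_le hk _ _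
    _ ≤ r / k ^ 2 + 4 := add_le_add (iotaK_mul_sq_le hk le_rfl _) (iotaK_le_four hk hmod)

lemma iotaK_sq_add_le (hk : 0 < k) (r : ℕ) : iotaK k (k ^ 2 + r) ≤ iotaK k r + 1 := by
  have := iotaK_mul_sq_le hk le_rfl 1
  rw [one_mul] at this
  have := iotaK_add_le hk (k ^ 2) r
  omega

lemma iotaK_add_one_le_of_pos {x : Fin k → ℕ} {a : Fin k} {r : ℕ}
    (hx : sqSum x = (a.1 + 1) ^ 2 + r) (ha : 0 < x a) : iotaK k r + 1 ≤ ∑ i, x i := by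
  set y := x - Pi.single a 1
  have hxy : x = y + Pi.single a 1 := by
    ext i
    by_cases h : i = a
    · subst h; simp [y]; omega
    · simp [y, h]
  rw [hxy, sqSum_add, sqSum_single, one_mul, add_comm, Nat.add_left_cancel_iff] at hx
  rw [hxy, ← hx]
  simpa [sum_add_distrib] using iotaK_le_sum y

/-- Either an optimal representation of `k² + r` uses the part `k²`, or all its parts are at most
`(k - 1)²`. -/
lemma iotaK_add_one_le_or_le_mul_sq (hk : 0 < k) (r : ℕ) :
    iotaK k r + 1 ≤ iotaK k (k ^ 2 + r) ∨ k ^ 2 + r ≤ iotaK k (k ^ 2 + r) * (k - 1) ^ 2 := by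
  obtain ⟨x, hx, hsum⟩ := exists_sqSum_eq_iotaK hk (k ^ 2 + r)
  set top : Fin k := ⟨k - 1, by omega⟩
  rcases Nat.eq_zero_or_pos (x top) with h0 | hpos
  · right
    rw [← hsum, ← hx]
    refine sqSum_le_mul_sq fun i hi => ?_
    rwa [show i = top from Fin.ext (by simp only [top]; omega)]
  · left
    rw [← hsum]
    exact iotaK_add_one_le_of_pos (by rw [hx, Nat.sub_add_cancel hk]) hpos

lemma add_four_mul_sub_one_sq_lt {q : ℕ} (hk : 0 < k) (hq : 3 * k ≤ 2 * q + 4) :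
    (q + 4) * (k - 1) ^ 2 < (q + 1) * k ^ 2 := by
  obtain ⟨j, rfl⟩ : ∃ j, k = j + 1 := ⟨k - 1, by omega⟩
  rw [Nat.add_sub_cancel]
  nlinarith

theorem stmt12_general (k : ℕ) (hk : 0 < k) (r : ℕ)
    (hge : ((3 * k + 1) / 2 - 2) * k ^ 2 ≤ r) :
    iotaK k (k ^ 2 + r) = iotaK k r + 1 := by
  refine le_antisymm (iotaK_sq_add_le hk r) ?_
  rcases iotaK_add_one_le_or_le_mul_sq hk r with h | h
  · exact h
  by_contra hlt
  set q := r / k ^ 2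
  have hq : (3 * k + 1) / 2 - 2 ≤ q := (Nat.le_div_iff_mul_le (by positivity)).2 hge
  have hiota : iotaK k (k ^ 2 + r) ≤ q + 4 := by
    have := iotaK_le_div_add_four hk r
    omega
  have : (q + 1) * k ^ 2 ≤ (q + 4) * (k - 1) ^ 2 :=
    calc (q + 1) * k ^ 2 = k ^ 2 + q * k ^ 2 := by ring
      _ ≤ k ^ 2 + r := Nat.add_le_add_left (Nat.div_mul_le_self r _) _
      _ ≤ iotaK k (k ^ 2 + r) * (k - 1) ^ 2 := h
      _ ≤ (q + 4) * (k - 1) ^ 2 := Nat.mul_le_mul_right _ hiota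
  exact (add_four_mul_sub_one_sq_lt hk (by omega)).not_ge this

theorem stmt12 (k : ℕ) (hk : 0 < k) (r : ℕ) (hr : 0 < r)
    (hge : ((3 * k + 1) / 2 - 2) * k ^ 2 ≤ r) :
    iotaK k (k ^ 2 + r) = iotaK k r + 1 :=
  stmt12_general k hk r hge
end

section
/- Let k be a positive integer, let r ∈ ℕ, and let (x_1, …, x_k) ∈ ℕ^k be an optimal representation, i.e., Σ_{i=1}^k x_i·i² = r and Σ_{i=1}^k x_i = ι_k(r). Then x_i ≤ 3 for every 1 ≤ i ≤ ⌊k/2⌋, and x_i ≤ ⌊4k² / (k² − i²)⌋ for every i with ⌊k/2⌋ < i ≤ k − 1. -/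
namespace IotaK

variable {k : ℕ}

def sqWeight (y : Fin k → ℕ) : ℕ := ∑ i, y i * (i.1 + 1) ^ 2

lemma iotaK_sqWeight_le (y : Fin k → ℕ) : iotaK k (sqWeight y) ≤ ∑ i, y i :=
  Nat.sInf_le ⟨y, rfl, rfl⟩

@[simp]
lemma sqWeight_add (y z : Fin k → ℕ) : sqWeight (y + z) = sqWeight y + sqWeight z := by
  simp only [sqWeight, Pi.add_apply, add_mul, Finset.sum_add_distrib]

@[simp]
lemma sqWeight_single (i : Fin k) (n : ℕ) : sqWeight (Pi.single i n) = n * (i.1 + 1) ^ 2 := by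
  simp [sqWeight, Pi.single_apply]

lemma single_le {ι : Type*} [DecidableEq ι] {x : ι → ℕ} {i : ι} {n : ℕ} (h : n ≤ x i) :
    Pi.single i n ≤ x := by
  intro j
  rcases eq_or_ne j i with rfl | hj
  · simpa using h
  · simp [hj]

lemma sum_le_sum_of_sqWeight_eq {x a b : Fin k → ℕ} (hopt : ∑ i, x i = iotaK k (sqWeight x))
    (hax : a ≤ x) (hab : sqWeight a = sqWeight b) : ∑ i, a i ≤ ∑ i, b i := by
  obtain ⟨c, rfl⟩ : ∃ c, x = c + a := ⟨x - a, (tsub_add_cancel_of_le hax).symm⟩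
  have hle := iotaK_sqWeight_le (c + b)
  rw [sqWeight_add, ← hab, ← sqWeight_add, ← hopt] at hle
  simpa only [Pi.add_apply, Finset.sum_add_distrib, add_le_add_iff_left] using hle

lemma exists_sqWeight_eq_sq {a : ℕ} (ha : a ≤ k) :
    ∃ y : Fin k → ℕ, sqWeight y = a ^ 2 ∧ ∑ i, y i ≤ 1 := by
  rcases Nat.eq_zero_or_pos a with rfl | ha0
  · exact ⟨0, by simp [sqWeight], by simp⟩
  · refine ⟨Pi.single ⟨a - 1, by omega⟩ 1, ?_, by simp⟩
    rw [sqWeight_single, Nat.sub_add_cancel ha0, one_mul]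

lemma exists_sqWeight_eq_of_lt_sq {ρ : ℕ} (hρ : ρ < k ^ 2) :
    ∃ y : Fin k → ℕ, sqWeight y = ρ ∧ ∑ i, y i ≤ 4 := by
  obtain ⟨A, B, C, D, rfl⟩ := Nat.sum_four_squares ρ
  have hle : ∀ a, a ^ 2 < k ^ 2 → a ≤ k := fun a h =>
    (Nat.pow_lt_pow_iff_left two_ne_zero |>.1 h).le
  obtain ⟨yA, hA, cA⟩ := exists_sqWeight_eq_sq (hle A (by omega))
  obtain ⟨yB, hB, cB⟩ := exists_sqWeight_eq_sq (hle B (by omega))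
  obtain ⟨yC, hC, cC⟩ := exists_sqWeight_eq_sq (hle C (by omega))
  obtain ⟨yD, hD, cD⟩ := exists_sqWeight_eq_sq (hle D (by omega))
  refine ⟨yA + yB + yC + yD, by simp [hA, hB, hC, hD], ?_⟩
  simp only [Pi.add_apply, Finset.sum_add_distrib]
  omega

lemma le_three_of_optimal {x : Fin k → ℕ} (hopt : ∑ i, x i = iotaK k (sqWeight x))
    (i : Fin k) (hi : 2 * (i.1 + 1) ≤ k) : x i ≤ 3 := by
  by_contra! h
  have hle := sum_le_sum_of_sqWeight_eq (a := Pi.single i 4)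
    (b := Pi.single ⟨2 * i.1 + 1, by omega⟩ 1) hopt
    (single_le (by omega)) (by rw [sqWeight_single, sqWeight_single, one_mul]; ring)
  simp at hle

lemma le_div_add_four_of_optimal {x : Fin k → ℕ} (hopt : ∑ i, x i = iotaK k (sqWeight x))
    (i : Fin k) : x i ≤ x i * (i.1 + 1) ^ 2 / k ^ 2 + 4 := by
  set q := x i * (i.1 + 1) ^ 2 / k ^ 2
  obtain ⟨y, hy, hy4⟩ :=
    exists_sqWeight_eq_of_lt_sq (Nat.mod_lt (x i * (i.1 + 1) ^ 2) (pow_pos i.pos 2))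
  have hle := sum_le_sum_of_sqWeight_eq (a := Pi.single i (x i))
    (b := Pi.single (⟨k - 1, Nat.sub_one_lt_of_lt i.2⟩ : Fin k) q + y) hopt (single_le le_rfl) (by
      rw [sqWeight_add, sqWeight_single, sqWeight_single, hy, Nat.sub_add_cancel i.pos,
        Nat.div_add_mod'])
  simp only [Finset.sum_pi_single', Finset.mem_univ, if_true, Pi.add_apply,
    Finset.sum_add_distrib] at hle
  omega

lemma le_mul_div_sub_of_le_div_add {n a b c : ℕ} (hab : a < b) (h : n ≤ n * a / b + c) :
    n ≤ c * b / (b - a) := by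
  rw [Nat.le_div_iff_mul_le (by omega), Nat.mul_sub]
  have hdiv := Nat.div_mul_le_self (n * a) b
  have hmul : n * b ≤ (n * a / b + c) * b := Nat.mul_le_mul_right b h
  rw [add_mul] at hmul
  omega

end IotaK

theorem stmt13_general (k : ℕ) (r : ℕ) (x : Fin k → ℕ)
    (hrep : ∑ i, x i * (i.1 + 1) ^ 2 = r) (hopt : ∑ i, x i = iotaK k r) :
    ∀ i : Fin k,
      (i.1 + 1 ≤ k / 2 → x i ≤ 3) ∧
      (k / 2 < i.1 + 1 → i.1 + 1 ≤ k - 1 →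
        x i ≤ 4 * k ^ 2 / (k ^ 2 - (i.1 + 1) ^ 2)) := by
  subst hrep
  intro i
  refine ⟨fun hi => IotaK.le_three_of_optimal hopt i (by omega), fun _ hi => ?_⟩
  exact IotaK.le_mul_div_sub_of_le_div_add (Nat.pow_lt_pow_left (by omega) two_ne_zero)
    (IotaK.le_div_add_four_of_optimal hopt i)

theorem stmt13 (k : ℕ) (hk : 0 < k) (r : ℕ) (x : Fin k → ℕ)
    (hrep : ∑ i, x i * (i.1 + 1) ^ 2 = r) (hopt : ∑ i, x i = iotaK k r) :
    ∀ i : Fin k,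
      (i.1 + 1 ≤ k / 2 → x i ≤ 3) ∧
      (k / 2 < i.1 + 1 → i.1 + 1 ≤ k - 1 →
        x i ≤ 4 * k ^ 2 / (k ^ 2 - (i.1 + 1) ^ 2)) :=
  stmt13_general k r x hrep hopt
end

section
/- For every integer a ≥ 2, the Frobenius number of the set {a, a+1, a+4} equals 5a + 15 + (a+4)·(⌊a/4⌋ − 4) if a mod 4 ∈ {0, 1, 2}, and equals 5a + 18 + (a+4)·(⌊a/4⌋ − 4) if a ≡ 3 (mod 4). (The equalities are of integers; the stated expressions are nonnegative.) -/
/-!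
A sum of `k` of the generators `a, a + 1, a + 4` is `k * a + m` with `m = j + 4 * l`, `j + l ≤ k`;
the cheapest such writing of `m` takes `l = m / 4`, `j = m % 4`. So `k * a + m` is representable
iff `m / 4 + m % 4 ≤ k`. With `a = 4 q + r`, every level `k ≥ q + 2` fills the whole block
`[k a, k a + a)`, while level `q + 1` misses exactly the `m < a` with `m / 4 + m % 4 = q + 2`,
the largest of which is `4 q + 2` if `r = 3` and `4 q - 1` otherwise.
-/

theorem AddSubmonoid.mem_closure_triple {A : Type*} [AddCommMonoid A] {x y z w : A} :
    w ∈ AddSubmonoid.closure ({x, y, z} : Set A) ↔ ∃ i j k : ℕ, i • x + j • y + k • z = w := by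
  simp only [Set.insert_eq x, AddSubmonoid.closure_union, AddSubmonoid.mem_sup,
    AddSubmonoid.mem_closure_singleton, AddSubmonoid.mem_closure_pair]
  constructor
  · rintro ⟨-, ⟨i, rfl⟩, -, ⟨j, k, rfl⟩, rfl⟩
    exact ⟨i, j, k, add_assoc _ _ _⟩
  · rintro ⟨i, j, k, rfl⟩
    exact ⟨_, ⟨i, rfl⟩, _, ⟨j, k, rfl⟩, (add_assoc _ _ _).symm⟩

theorem mem_closure_iff_exists_level {a n : ℕ} :
    n ∈ AddSubmonoid.closure ({a, a + 1, a + 4} : Set ℕ) ↔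
      ∃ k m, m / 4 + m % 4 ≤ k ∧ k * a + m = n := by
  rw [AddSubmonoid.mem_closure_triple]
  constructor
  · rintro ⟨i, j, l, rfl⟩
    refine ⟨i + j + l, j + 4 * l, by omega, ?_⟩
    simp only [smul_eq_mul]
    ring
  · rintro ⟨k, m, hm, rfl⟩
    obtain ⟨i, rfl⟩ : ∃ i, k = i + m % 4 + m / 4 := ⟨k - m / 4 - m % 4, by omega⟩
    refine ⟨i, m % 4, m / 4, ?_⟩
    simp only [smul_eq_mul]
    linear_combination Nat.mod_add_div m 4

/-- The Frobenius number of `{a, a + 1, a + 4}` is `(a / 4 + 2) * a - frobeniusDeficit a`. -/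
def frobeniusDeficit (a : ℕ) : ℕ := if a % 4 = 3 then 1 else a % 4 + 1

theorem frobeniusDeficit_eq (a : ℕ) :
    (a % 4 = 3 ∧ frobeniusDeficit a = 1) ∨ (a % 4 ≠ 3 ∧ frobeniusDeficit a = a % 4 + 1) := by
  unfold frobeniusDeficit
  split_ifs with h <;> simp [h]

theorem frobenius_notMem_closure {a : ℕ} (ha : 2 ≤ a) :
    (a / 4 + 2) * a - frobeniusDeficit a ∉ AddSubmonoid.closure ({a, a + 1, a + 4} : Set ℕ) := by
  rw [mem_closure_iff_exists_level]
  rintro ⟨k, m, hm, hkm⟩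
  have hc := frobeniusDeficit_eq a
  have hexp : (a / 4 + 2) * a = a / 4 * a + 2 * a := by ring
  rcases lt_trichotomy k (a / 4 + 1) with hk | rfl | hk
  · have : k * a ≤ a / 4 * a := Nat.mul_le_mul_right a (by omega)
    omega
  · have : (a / 4 + 1) * a = a / 4 * a + a := by ring
    omega
  · have : (a / 4 + 2) * a ≤ k * a := Nat.mul_le_mul_right a hk
    omega

theorem mem_closure_of_frobenius_lt {a n : ℕ} (ha : 2 ≤ a)
    (hn : (a / 4 + 2) * a - frobeniusDeficit a < n) :
    n ∈ AddSubmonoid.closure ({a, a + 1, a + 4} : Set ℕ) := by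
  rw [mem_closure_iff_exists_level]
  have hc := frobeniusDeficit_eq a
  have hexp : (a / 4 + 2) * a = (a / 4 + 1) * a + a := by ring
  by_cases hbig : (a / 4 + 2) * a ≤ n
  · have hdiv := Nat.div_add_mod' n a
    have hmod : n % a < a := Nat.mod_lt n (by omega)
    have hk : a / 4 + 2 ≤ n / a := (Nat.le_div_iff_mul_le (by omega)).2 hbig
    exact ⟨n / a, n % a, by omega, hdiv⟩
  · exact ⟨a / 4 + 1, n - (a / 4 + 1) * a, by omega, by omega⟩

theorem isGreatest_notMem_closure {a : ℕ} (ha : 2 ≤ a) :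
    IsGreatest {n : ℕ | n ∉ AddSubmonoid.closure ({a, a + 1, a + 4} : Set ℕ)}
      ((a / 4 + 2) * a - frobeniusDeficit a) :=
  ⟨frobenius_notMem_closure ha, fun _ hn =>
    not_lt.mp fun hlt => hn (mem_closure_of_frobenius_lt ha hlt)⟩

theorem stmt17 (a : ℕ) (ha : 2 ≤ a) :
    ∃ g : ℕ,
      IsGreatest {n : ℕ | n ∉ AddSubmonoid.closure ({a, a + 1, a + 4} : Set ℕ)} g ∧
      ((a % 4 = 0 ∨ a % 4 = 1 ∨ a % 4 = 2) →
        (g : ℤ) = 5 * (a : ℤ) + 15 + ((a : ℤ) + 4) * (((a / 4 : ℕ) : ℤ) - 4)) ∧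
      (a % 4 = 3 →
        (g : ℤ) = 5 * (a : ℤ) + 18 + ((a : ℤ) + 4) * (((a / 4 : ℕ) : ℤ) - 4)) := by
  refine ⟨_, isGreatest_notMem_closure ha, ?_⟩
  have hc := frobeniusDeficit_eq a
  have hle : frobeniusDeficit a ≤ (a / 4 + 2) * a := by
    have : 2 * a ≤ (a / 4 + 2) * a := Nat.mul_le_mul_right a (by omega)
    omega
  have ha4 : (a : ℤ) = 4 * ((a / 4 : ℕ) : ℤ) + ((a % 4 : ℕ) : ℤ) := by
    exact_mod_cast (Nat.div_add_mod a 4).symm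
  rw [Nat.cast_sub hle, Nat.cast_mul, Nat.cast_add, Nat.cast_ofNat]
  constructor <;> intro hr
  · rw [show frobeniusDeficit a = a % 4 + 1 by omega, Nat.cast_add, Nat.cast_one]
    linear_combination ha4
  · rw [show frobeniusDeficit a = 1 by omega, Nat.cast_one]
    rw [hr] at ha4
    linear_combination ha4
end
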